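/- arXiv:2007.06266 — 3 statements merged into one kernel-verified Lean document; each statement's English description precedes it below -/
import Mathlib

section
/- Let E be a real Hilbert space and U ⊆ E a nonempty closed convex set. Let c₀ > 0, L ≥ 0, e₁, e₂ ≥ 0, and ρ > 0 satisfy ρ L² ≤ c₀ and c₀ ρ ≤ 1. Suppose a, b ∈ U and v, w, v̂, ŵ ∈ E satisfy: a = P_U(a − ρ v) and b = P_U(b − ρ w) (P_U the metric projection onto U); the monotonicity condition ⟨v̂ − ŵ, a − b⟩ ≥ c₀ ‖a − b‖²; the Lipschitz-type bound ‖v̂ − ŵ‖ ≤ L ‖a − b‖; and the perturbation bounds ‖v − v̂‖ ≤ e₁ and ‖w − ŵ‖ ≤ e₂. Then ‖a − b‖ ≤ (2/c₀)(e₁ + e₂). -/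
/-!
Both fixed-point conditions are variational inequalities: `⟪v, z - a⟫ ≥ 0` and `⟪w, z - b⟫ ≥ 0`
for all `z ∈ U`. Testing the first at `z = b` and the second at `z = a` gives
`⟪v - w, a - b⟫ ≤ 0`, so in the monotonicity inequality only the perturbations survive:
`c₀ ‖a - b‖² ≤ ⟪(vh - v) + (w - wh), a - b⟫ ≤ (e₁ + e₂) ‖a - b‖`. This yields
`‖a - b‖ ≤ (e₁ + e₂) / c₀`.
-/

open RealInnerProductSpace

section

variable {E : Type*} [NormedAddCommGroup E] [InnerProductSpace ℝ E]

theorem real_inner_sub_le_zero_of_forall_dist_le {U : Set E} (hU : Convex ℝ U) {a p : E}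
    (ha : a ∈ U) (hmin : ∀ z ∈ U, dist p a ≤ dist p z) :
    ∀ z ∈ U, ⟪p - a, z - a⟫ ≤ 0 := by
  have : Nonempty U := ⟨⟨a, ha⟩⟩
  refine (norm_eq_iInf_iff_real_inner_le_zero hU ha).mp (le_antisymm ?_ ?_)
  · exact le_ciInf fun z => by simpa only [dist_eq_norm] using hmin z z.2
  · exact ciInf_le ⟨0, fun _ ⟨_, h⟩ => h ▸ norm_nonneg _⟩ (⟨a, ha⟩ : U)

theorem real_inner_nonneg_of_forall_dist_sub_smul_le {U : Set E} (hU : Convex ℝ U) {a v : E}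
    {ρ : ℝ} (hρ : 0 < ρ) (ha : a ∈ U) (hfix : ∀ z ∈ U, dist (a - ρ • v) a ≤ dist (a - ρ • v) z) :
    ∀ z ∈ U, 0 ≤ ⟪v, z - a⟫ := by
  intro z hz
  have hvi := real_inner_sub_le_zero_of_forall_dist_le hU ha hfix z hz
  rw [sub_sub_cancel_left, inner_neg_left, real_inner_smul_left] at hvi
  exact nonneg_of_mul_nonneg_right (by linarith) hρ

theorem mul_norm_sub_le_of_inner_nonneg {a b v w vh wh : E} {c₀ e₁ e₂ : ℝ}
    (hva : 0 ≤ ⟪v, b - a⟫) (hwb : 0 ≤ ⟪w, a - b⟫)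
    (hmono : c₀ * ‖a - b‖ ^ 2 ≤ ⟪vh - wh, a - b⟫)
    (hv : ‖v - vh‖ ≤ e₁) (hw : ‖w - wh‖ ≤ e₂) :
    c₀ * ‖a - b‖ ≤ e₁ + e₂ := by
  have hvw : ⟪v - w, a - b⟫ ≤ 0 := by
    have hva' : ⟪v, a - b⟫ ≤ 0 := by rw [← neg_sub b a, inner_neg_right]; linarith
    rw [inner_sub_left]
    linarith
  have hpert : ⟪(vh - v) + (w - wh), a - b⟫ ≤ (e₁ + e₂) * ‖a - b‖ :=
    calc ⟪(vh - v) + (w - wh), a - b⟫ ≤ ‖(vh - v) + (w - wh)‖ * ‖a - b‖ :=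
          real_inner_le_norm _ _
      _ ≤ (‖v - vh‖ + ‖w - wh‖) * ‖a - b‖ := by
          gcongr
          exact (norm_add_le _ _).trans_eq (by rw [norm_sub_rev])
      _ ≤ (e₁ + e₂) * ‖a - b‖ := by gcongr
  have hsplit : vh - wh = ((vh - v) + (w - wh)) + (v - w) := by abel
  rw [hsplit, inner_add_left] at hmono
  rcases (norm_nonneg (a - b)).eq_or_lt with h0 | hpos
  · rw [← h0, mul_zero]
    exact add_nonneg ((norm_nonneg _).trans hv) ((norm_nonneg _).trans hw)
  · exact le_of_mul_le_mul_right (by nlinarith) hpos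

end

theorem projected_gradient_stability_general
    {E : Type*} [NormedAddCommGroup E] [InnerProductSpace ℝ E]
    (U : Set E) (hUconv : Convex ℝ U)
    (c₀ e₁ e₂ ρ : ℝ) (hc₀ : 0 < c₀)
    (hρ : 0 < ρ)
    (a b : E) (ha : a ∈ U) (hb : b ∈ U)
    (v w vh wh : E)
    (haProj : ∀ z ∈ U, dist (a - ρ • v) a ≤ dist (a - ρ • v) z)
    (hbProj : ∀ z ∈ U, dist (b - ρ • w) b ≤ dist (b - ρ • w) z)
    (hmono : c₀ * ‖a - b‖ ^ 2 ≤ (inner ℝ (vh - wh) (a - b) : ℝ))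
    (hv : ‖v - vh‖ ≤ e₁) (hw : ‖w - wh‖ ≤ e₂) :
    ‖a - b‖ ≤ (2 / c₀) * (e₁ + e₂) := by
  have hva := real_inner_nonneg_of_forall_dist_sub_smul_le hUconv hρ ha haProj b hb
  have hwb := real_inner_nonneg_of_forall_dist_sub_smul_le hUconv hρ hb hbProj a ha
  have hkey := mul_norm_sub_le_of_inner_nonneg hva hwb hmono hv hw
  have he : 0 ≤ e₁ + e₂ := add_nonneg ((norm_nonneg _).trans hv) ((norm_nonneg _).trans hw)
  rw [div_mul_eq_mul_div, le_div_iff₀ hc₀]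
  linarith

/-- Abstract stability estimate at the core of Lemma 4.6 of the paper
(inequalities (37)–(43)): if `a` and `b` are fixed points of the projected
gradient maps `P_U(· − ρ v)` and `P_U(· − ρ w)` (stated via the minimal-distance
characterization of the metric projection onto the nonempty closed convex set `U`),
the unperturbed gradients are uniformly monotone and Lipschitz, and the
perturbations are bounded by `e₁`, `e₂`, then `‖a − b‖ ≤ (2/c₀)(e₁ + e₂)`,
provided `ρ L² ≤ c₀` and `c₀ ρ ≤ 1`. -/
theorem projected_gradient_stability
    {E : Type*} [NormedAddCommGroup E] [InnerProductSpace ℝ E] [CompleteSpace E]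
    (U : Set E) (hUne : U.Nonempty) (hUcl : IsClosed U) (hUconv : Convex ℝ U)
    (c₀ L e₁ e₂ ρ : ℝ) (hc₀ : 0 < c₀) (hL : 0 ≤ L) (he₁ : 0 ≤ e₁) (he₂ : 0 ≤ e₂)
    (hρ : 0 < ρ) (hρL : ρ * L ^ 2 ≤ c₀) (hc₀ρ : c₀ * ρ ≤ 1)
    (a b : E) (ha : a ∈ U) (hb : b ∈ U)
    (v w vh wh : E)
    (haProj : ∀ z ∈ U, dist (a - ρ • v) a ≤ dist (a - ρ • v) z)
    (hbProj : ∀ z ∈ U, dist (b - ρ • w) b ≤ dist (b - ρ • w) z)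
    (hmono : c₀ * ‖a - b‖ ^ 2 ≤ (inner ℝ (vh - wh) (a - b) : ℝ))
    (hLip : ‖vh - wh‖ ≤ L * ‖a - b‖)
    (hv : ‖v - vh‖ ≤ e₁) (hw : ‖w - wh‖ ≤ e₂) :
    ‖a - b‖ ≤ (2 / c₀) * (e₁ + e₂) :=
  projected_gradient_stability_general U hUconv c₀ e₁ e₂ ρ hc₀ hρ a b ha hb v w vh wh haProj hbProj
    hmono hv hw
end

section
/- Let U ⊆ ℝ^m be an open convex set, μ a finite Borel measure on ℝⁿ, and F : ℝⁿ → ℝ^m a μ-integrable function. Let φ̄ : ℝⁿ → ℝ^m be a bounded continuously differentiable function with bounded derivative such that φ̄(x) ∈ U for all x. Suppose that ∫ ⟨F(x), φ(x) − φ̄(x)⟩ dμ(x) ≥ 0 for every bounded continuously differentiable function φ : ℝⁿ → ℝ^m with bounded derivative satisfying φ(x) ∈ U for all x. Then F(x) = 0 for μ-almost every x. -/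
/-!
Testing the inequality with `φ = φ̄ + h • (c - φ̄)`, where `c ∈ U` and `h` is a smooth compactly
supported cutoff with values in `[0, 1]` (admissible by convexity of `U`), gives
`∫ h ⟪F, c - φ̄⟫ dμ ≥ 0` for all such `h`. Cutoffs approximate indicators of compact sets, and
the finite measure `|⟪F, c - φ̄⟫| μ` is tight, so `⟪F, c - φ̄⟫ ≥ 0` a.e. Running `c` through a
countable dense subset of `U`, for a.e. `x` we get `⟪F x, c - φ̄ x⟫ ≥ 0` for all `c ∈ U`; as
`φ̄ x` is an interior point of `U`, the choice `c = φ̄ x - t • F x` with small `t > 0` forces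
`F x = 0`.
-/

open MeasureTheory Set Filter Topology Metric Function TopologicalSpace
open scoped ContDiff Manifold

section BoundedC1

variable {E F : Type*} [NormedAddCommGroup E] [NormedSpace ℝ E]
  [NormedAddCommGroup F] [NormedSpace ℝ F] {f g : E → F}

def IsBoundedC1 (f : E → F) : Prop :=
  ContDiff ℝ 1 f ∧ ∃ M : ℝ, ∀ x, ‖f x‖ ≤ M ∧ ‖fderiv ℝ f x‖ ≤ M

theorem IsBoundedC1.of_bounds (hf : ContDiff ℝ 1 f) {A B : ℝ} (hA : ∀ x, ‖f x‖ ≤ A)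
    (hB : ∀ x, ‖fderiv ℝ f x‖ ≤ B) : IsBoundedC1 f :=
  ⟨hf, max A B, fun x => ⟨(hA x).trans (le_max_left _ _), (hB x).trans (le_max_right _ _)⟩⟩

theorem IsBoundedC1.exists_bounds (hf : IsBoundedC1 f) :
    ∃ M ≥ 0, ∀ x, ‖f x‖ ≤ M ∧ ‖fderiv ℝ f x‖ ≤ M := by
  obtain ⟨M, hM⟩ := hf.2
  exact ⟨M, (norm_nonneg _).trans (hM 0).1, hM⟩

theorem isBoundedC1_const (c : F) : IsBoundedC1 fun _ : E => c :=
  .of_bounds contDiff_const (fun _ => le_rfl) (B := 0) fun _ => by simp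

theorem IsBoundedC1.add (hf : IsBoundedC1 f) (hg : IsBoundedC1 g) :
    IsBoundedC1 fun x => f x + g x := by
  obtain ⟨M, -, hM⟩ := hf.exists_bounds
  obtain ⟨N, -, hN⟩ := hg.exists_bounds
  refine .of_bounds (hf.1.add hg.1) (A := M + N)
    (fun x => (norm_add_le _ _).trans (add_le_add (hM x).1 (hN x).1)) (B := M + N) fun x => ?_
  rw [fderiv_fun_add (hf.1.differentiable one_ne_zero x) (hg.1.differentiable one_ne_zero x)]
  exact (norm_add_le _ _).trans (add_le_add (hM x).2 (hN x).2)

theorem IsBoundedC1.sub (hf : IsBoundedC1 f) (hg : IsBoundedC1 g) :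
    IsBoundedC1 fun x => f x - g x := by
  obtain ⟨M, -, hM⟩ := hf.exists_bounds
  obtain ⟨N, -, hN⟩ := hg.exists_bounds
  refine .of_bounds (hf.1.sub hg.1) (A := M + N)
    (fun x => (norm_sub_le _ _).trans (add_le_add (hM x).1 (hN x).1)) (B := M + N) fun x => ?_
  rw [fderiv_fun_sub (hf.1.differentiable one_ne_zero x) (hg.1.differentiable one_ne_zero x)]
  exact (norm_sub_le _ _).trans (add_le_add (hM x).2 (hN x).2)

theorem IsBoundedC1.smul {h : E → ℝ} (hh : IsBoundedC1 h) (hf : IsBoundedC1 f) :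
    IsBoundedC1 fun x => h x • f x := by
  obtain ⟨M, hM0, hM⟩ := hh.exists_bounds
  obtain ⟨N, hN0, hN⟩ := hf.exists_bounds
  refine .of_bounds (hh.1.smul hf.1) (A := M * N) (fun x => ?_) (B := M * N + M * N) fun x => ?_
  · rw [norm_smul]
    exact mul_le_mul (hM x).1 (hN x).1 (norm_nonneg _) hM0
  · rw [fderiv_fun_smul (hh.1.differentiable one_ne_zero x) (hf.1.differentiable one_ne_zero x)]
    refine (norm_add_le _ _).trans (add_le_add ?_ ?_)
    · exact (norm_smul_le _ _).trans (mul_le_mul (hM x).1 (hN x).2 (norm_nonneg _) hM0)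
    · rw [ContinuousLinearMap.norm_smulRight_apply]
      exact mul_le_mul (hM x).2 (hN x).1 (norm_nonneg _) hM0

theorem HasCompactSupport.isBoundedC1 (hf : ContDiff ℝ 1 f) (hs : HasCompactSupport f) :
    IsBoundedC1 f := by
  obtain ⟨A, hA⟩ := hf.continuous.bounded_above_of_compact_support hs
  obtain ⟨B, hB⟩ := (hf.continuous_fderiv one_ne_zero).bounded_above_of_compact_support
    (hs.fderiv ℝ)
  exact .of_bounds hf hA hB

end BoundedC1

theorem ae_nonneg_of_forall_setIntegral_isCompact_nonneg {β : Type*} [TopologicalSpace β]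
    [PolishSpace β] [MeasurableSpace β] [BorelSpace β] {μ : Measure β} {G : β → ℝ}
    (hG : Integrable G μ) (hK : ∀ K, IsCompact K → 0 ≤ ∫ x in K, G x ∂μ) : 0 ≤ᵐ[μ] G := by
  refine ae_nonneg_of_forall_setIntegral_nonneg hG fun s hs _ => ?_
  let ν := μ.withDensity fun x => ‖G x‖ₑ
  have : IsFiniteMeasure ν := isFiniteMeasure_withDensity hG.2.ne
  refine le_of_forall_pos_le_add fun ε hε => ?_
  obtain ⟨K, hKs, hKc, hνK⟩ :=
    hs.exists_isCompact_sdiff_lt (measure_ne_top ν s) (ENNReal.ofReal_pos.2 hε).ne'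
  have hsmall : ‖∫ x in s \ K, G x ∂μ‖ₑ < ENNReal.ofReal ε :=
    (enorm_integral_le_lintegral_enorm _).trans_lt <| by
      rwa [← withDensity_apply _ (hs.diff hKc.measurableSet)]
  rw [Real.enorm_eq_ofReal_abs, ENNReal.ofReal_lt_ofReal_iff hε] at hsmall
  linarith [hK K hKc, abs_lt.1 hsmall, setIntegral_sdiff hKc.measurableSet hG.integrableOn hKs]

theorem IsCompact.setIntegral_nonneg_of_forall_integral_smooth_mul_nonneg
    {E : Type*} [NormedAddCommGroup E] [NormedSpace ℝ E] [FiniteDimensional ℝ E]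
    [MeasurableSpace E] [BorelSpace E] {μ : Measure E} {G : E → ℝ} (hG : Integrable G μ)
    (hGg : ∀ g : E → ℝ, ContDiff ℝ ∞ g → HasCompactSupport g → (∀ x, g x ∈ Icc 0 1) →
      0 ≤ ∫ x, g x * G x ∂μ)
    {K : Set E} (hK : IsCompact K) : 0 ≤ ∫ x in K, G x ∂μ := by
  have hbump : ∀ n : ℕ, ∃ g : E → ℝ, ContDiff ℝ ∞ g ∧ range g ⊆ Icc 0 1 ∧
      support g = thickening (1 / (n + 1)) K ∧ ∀ x, x ∈ K ↔ g x = 1 := fun n => by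
    obtain ⟨g, hg, hrange, hsupp, hone⟩ :=
      exists_contMDiff_support_eq_eq_one_iff 𝓘(ℝ, E) (n := (⊤ : ℕ∞)) isOpen_thickening
        hK.isClosed (self_subset_thickening Nat.one_div_pos_of_nat K)
    exact ⟨g, contMDiff_iff_contDiff.1 hg, hrange, hsupp, hone⟩
  choose g hg hrange hsupp hone using hbump
  have hbound : ∀ n x, ‖g n x * G x‖ ≤ ‖G x‖ := fun n x => by
    obtain ⟨h0, h1⟩ := hrange n (mem_range_self x)
    rw [norm_mul, Real.norm_of_nonneg h0]
    exact mul_le_of_le_one_left (norm_nonneg _) h1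
  have hlim : ∀ x, Tendsto (fun n => g n x * G x) atTop (𝓝 (K.indicator G x)) := fun x => by
    by_cases hx : x ∈ K
    · simp [(hone _ x).1 hx, hx]
    · obtain ⟨ε, hε, hxε⟩ : ∃ ε > 0, x ∉ thickening ε K := by
        rw [← hK.isClosed.closure_eq, closure_eq_iInter_thickening K] at hx
        simpa using hx
      rw [indicator_of_notMem hx]
      refine tendsto_const_nhds.congr' ?_
      filter_upwards [(tendsto_order.1 tendsto_one_div_add_atTop_nhds_zero_nat).2 ε hε] with n hn
      have : g n x = 0 := notMem_support.1 fun hxn =>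
        hxε (thickening_mono hn.le K (hsupp n ▸ hxn))
      simp [this]
  have hconv := tendsto_integral_of_dominated_convergence (fun x => ‖G x‖)
    (fun n => (hg n).continuous.aestronglyMeasurable.mul hG.aestronglyMeasurable) hG.norm
    (fun n => ae_of_all _ (hbound n)) (ae_of_all _ hlim)
  rw [← integral_indicator hK.measurableSet]
  refine ge_of_tendsto' hconv fun n => hGg _ (hg n) ?_ fun x => hrange n (mem_range_self x)
  refine HasCompactSupport.of_support_subset_isCompact (hK.cthickening (r := 1)) ?_
  rw [hsupp n]
  exact thickening_subset_cthickening_of_le (div_le_one_of_le₀ (by simp) (by positivity)) K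

theorem MeasureTheory.Integrable.inner_bdd {α F : Type*} [MeasurableSpace α] {μ : Measure α}
    [NormedAddCommGroup F] [InnerProductSpace ℝ F] {f g : α → F} (hf : Integrable f μ)
    (hg : AEStronglyMeasurable g μ) {C : ℝ} (hC : ∀ x, ‖g x‖ ≤ C) :
    Integrable (fun x => inner ℝ (f x) (g x)) μ :=
  (hf.norm.mul_const C).mono' (hf.aestronglyMeasurable.inner hg) <| ae_of_all _ fun x =>
    (norm_inner_le_norm _ _).trans (mul_le_mul_of_nonneg_left (hC x) (norm_nonneg _))

theorem ae_inner_sub_nonneg_of_forall_integral_inner_sub_nonneg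
    {E F : Type*} [NormedAddCommGroup E] [NormedSpace ℝ E] [FiniteDimensional ℝ E]
    [MeasurableSpace E] [BorelSpace E] [NormedAddCommGroup F] [InnerProductSpace ℝ F]
    {U : Set F} (hU : Convex ℝ U) {μ : Measure E} {Φ : E → F} (hΦ : Integrable Φ μ)
    {φbar : E → F} (hφbar : IsBoundedC1 φbar) (hφbarU : ∀ x, φbar x ∈ U)
    (hineq : ∀ φ : E → F, IsBoundedC1 φ → (∀ x, φ x ∈ U) →
      0 ≤ ∫ x, inner ℝ (Φ x) (φ x - φbar x) ∂μ)
    {c : F} (hc : c ∈ U) :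
    ∀ᵐ x ∂μ, 0 ≤ inner ℝ (Φ x) (c - φbar x) := by
  have hdir : IsBoundedC1 fun x => c - φbar x := (isBoundedC1_const c).sub hφbar
  obtain ⟨M, -, hM⟩ := hdir.exists_bounds
  have hint := hΦ.inner_bdd hdir.1.continuous.aestronglyMeasurable fun x => (hM x).1
  refine ae_nonneg_of_forall_setIntegral_isCompact_nonneg hint fun K hK =>
    hK.setIntegral_nonneg_of_forall_integral_smooth_mul_nonneg hint fun h hh hhs hh01 => ?_
  have hφ : IsBoundedC1 fun x => φbar x + h x • (c - φbar x) :=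
    hφbar.add ((hhs.isBoundedC1 (hh.of_le (by norm_num))).smul hdir)
  calc 0 ≤ ∫ x, inner ℝ (Φ x) (φbar x + h x • (c - φbar x) - φbar x) ∂μ :=
        hineq _ hφ fun x => hU.add_smul_sub_mem (hφbarU x) hc (hh01 x)
    _ = ∫ x, h x * inner ℝ (Φ x) (c - φbar x) ∂μ := by
        simp only [add_sub_cancel_left, real_inner_smul_right]

theorem TopologicalSpace.IsSeparable.ae_forall_mem {α X : Type*} [MeasurableSpace α]
    {μ : Measure α} [TopologicalSpace X] [PseudoMetrizableSpace X] {s : Set X}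
    (hs : IsSeparable s) {p : α → X → Prop} (hp : ∀ a, IsClosed {y | p a y})
    (h : ∀ y ∈ s, ∀ᵐ a ∂μ, p a y) : ∀ᵐ a ∂μ, ∀ y ∈ s, p a y := by
  obtain ⟨t, hts, htc, hst⟩ := hs.exists_countable_dense_subset
  filter_upwards [(ae_ball_iff htc).2 fun y hy => h y (hts hy)] with a ha y hy
  exact closure_minimal ha (hp a) (hst hy)

theorem eq_zero_of_forall_inner_sub_nonneg {F : Type*} [NormedAddCommGroup F]
    [InnerProductSpace ℝ F] {U : Set F} {a v : F} (ha : U ∈ 𝓝 a)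
    (h : ∀ c ∈ U, 0 ≤ inner ℝ v (c - a)) : v = 0 := by
  have hlim : Tendsto (fun t : ℝ => a - t • v) (𝓝[>] 0) (𝓝 a) :=
    ((continuous_const.sub (continuous_id.smul continuous_const)).tendsto' 0 a
      (by simp)).mono_left nhdsWithin_le_nhds
  obtain ⟨t, htU, ht⟩ := ((hlim.eventually ha).and self_mem_nhdsWithin).exists
  have := h _ htU
  rw [sub_sub_cancel_left, inner_neg_right, real_inner_smul_right] at this
  exact real_inner_self_nonpos.1 (nonpos_of_mul_nonpos_right (by linarith) ht)

theorem localization_of_variational_inequality_general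
    {n m : ℕ} (U : Set (EuclideanSpace ℝ (Fin m))) (hUopen : IsOpen U)
    (hUconv : Convex ℝ U)
    (μ : Measure (EuclideanSpace ℝ (Fin n)))
    (F : EuclideanSpace ℝ (Fin n) → EuclideanSpace ℝ (Fin m)) (hF : Integrable F μ)
    (φbar : EuclideanSpace ℝ (Fin n) → EuclideanSpace ℝ (Fin m))
    (hφbar : ContDiff ℝ 1 φbar)
    (hφbarBdd : ∃ M : ℝ, ∀ x, ‖φbar x‖ ≤ M ∧ ‖fderiv ℝ φbar x‖ ≤ M)
    (hφbarU : ∀ x, φbar x ∈ U)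
    (hineq : ∀ φ : EuclideanSpace ℝ (Fin n) → EuclideanSpace ℝ (Fin m),
      ContDiff ℝ 1 φ → (∃ M : ℝ, ∀ x, ‖φ x‖ ≤ M ∧ ‖fderiv ℝ φ x‖ ≤ M) →
      (∀ x, φ x ∈ U) →
      0 ≤ ∫ x, (inner ℝ (F x) (φ x - φbar x) : ℝ) ∂μ) :
    ∀ᵐ x ∂μ, F x = 0 := by
  have hpointwise : ∀ c ∈ U, ∀ᵐ x ∂μ, 0 ≤ inner ℝ (F x) (c - φbar x) := fun c hc =>
    ae_inner_sub_nonneg_of_forall_integral_inner_sub_nonneg hUconv hF ⟨hφbar, hφbarBdd⟩ hφbarU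
      (fun φ hφ => hineq φ hφ.1 hφ.2) hc
  have hclosed : ∀ x, IsClosed {c | 0 ≤ inner ℝ (F x) (c - φbar x)} := fun x =>
    isClosed_le continuous_const (continuous_const.inner (continuous_id.sub continuous_const))
  filter_upwards [(IsSeparable.of_separableSpace U).ae_forall_mem hclosed hpointwise] with x hx
  exact eq_zero_of_forall_inner_sub_nonneg (hUopen.mem_nhds (hφbarU x)) hx

/-- Localization lemma underlying the passage in Theorem 3.1 of the paper from the
integrated variational inequality over all bounded `C¹` feedback functions valued in
an open convex control set `U` to the pointwise first-order condition: if
`∫ ⟨F, φ − φ̄⟩ dμ ≥ 0` for every admissible `φ`, then `F = 0` μ-a.e. -/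
theorem localization_of_variational_inequality
    {n m : ℕ} (U : Set (EuclideanSpace ℝ (Fin m))) (hUopen : IsOpen U)
    (hUconv : Convex ℝ U)
    (μ : Measure (EuclideanSpace ℝ (Fin n))) [IsFiniteMeasure μ]
    (F : EuclideanSpace ℝ (Fin n) → EuclideanSpace ℝ (Fin m)) (hF : Integrable F μ)
    (φbar : EuclideanSpace ℝ (Fin n) → EuclideanSpace ℝ (Fin m))
    (hφbar : ContDiff ℝ 1 φbar)
    (hφbarBdd : ∃ M : ℝ, ∀ x, ‖φbar x‖ ≤ M ∧ ‖fderiv ℝ φbar x‖ ≤ M)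
    (hφbarU : ∀ x, φbar x ∈ U)
    (hineq : ∀ φ : EuclideanSpace ℝ (Fin n) → EuclideanSpace ℝ (Fin m),
      ContDiff ℝ 1 φ → (∃ M : ℝ, ∀ x, ‖φ x‖ ≤ M ∧ ‖fderiv ℝ φ x‖ ≤ M) →
      (∀ x, φ x ∈ U) →
      0 ≤ ∫ x, (inner ℝ (F x) (φ x - φbar x) : ℝ) ∂μ) :
    ∀ᵐ x ∂μ, F x = 0 :=
  localization_of_variational_inequality_general U hUopen hUconv μ F hF φbar hφbar hφbarBdd hφbarU
    hineq
end

section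
/- Let T > 0, N a positive integer, t_i = iT/N for 0 ≤ i ≤ N, and K, L > 0. Let b : [0,T] × ℝⁿ × ℝ^m → ℝⁿ be continuous with |b(t,x,u) − b(t,y,u)| ≤ K|x − y| and |b(t,0,u)| ≤ K(1 + |u|) for all t, x, y, u, and let φ₀, …, φ_{N−1} : ℝⁿ → ℝ^m satisfy |φ_i(x) − φ_i(y)| ≤ K|x − y| and |φ_i(0)| ≤ L for all i and x, y. Let X : [0,T] → ℝⁿ be continuous with X(0) = x₀ and, on each interval [t_i, t_{i+1}], X′(t) = b(t, X(t), φ_i(X(t_i))). Then there exists a constant C, depending only on K, L and T (and not on N), such that sup_{0 ≤ t ≤ T} |X(t)| ≤ C(1 + |x₀|). -/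
open Real Set

/-!
On the `i`-th step the control is frozen at `u = φ_i(X(t_i))`, so the drift obeys
`‖b(t, x, u)‖ ≤ K‖x‖ + K(1 + L + K‖X(t_i)‖)`. Grönwall's inequality on `[t_i, t_{i+1}]` then gives
`‖X(t)‖ + (1 + L) ≤ ρ (‖X(t_i)‖ + (1 + L))` with `ρ = exp((K + K²) h)`, `h = T/N`: the shift by
`1 + L` is what makes the step bound purely multiplicative. Iterating over the `N` steps produces
the factor `ρ^N = exp((K + K²) T)`, which does not depend on `N`.
-/

theorem norm_apply_le_norm_apply_zero_add {E F : Type*} [SeminormedAddCommGroup E]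
    [SeminormedAddCommGroup F] {g : E → F} {K : ℝ} (hg : ∀ x y, ‖g x - g y‖ ≤ K * ‖x - y‖)
    (x : E) : ‖g x‖ ≤ ‖g 0‖ + K * ‖x‖ := by
  calc ‖g x‖ ≤ ‖g 0‖ + ‖g x - g 0‖ := norm_le_norm_add_norm_sub' _ _
    _ ≤ ‖g 0‖ + K * ‖x‖ := by gcongr; simpa using hg x 0

theorem norm_drift_feedback_le {E F : Type*} [SeminormedAddCommGroup E]
    [SeminormedAddCommGroup F] {b : ℝ → E → F → E} {φ : E → F} {K L : ℝ} (hK : 0 ≤ K)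
    (hb : ∀ t x y u, ‖b t x u - b t y u‖ ≤ K * ‖x - y‖) (hb0 : ∀ t u, ‖b t 0 u‖ ≤ K * (1 + ‖u‖))
    (hφ : ∀ x y, ‖φ x - φ y‖ ≤ K * ‖x - y‖) (hφ0 : ‖φ 0‖ ≤ L) (t : ℝ) (x y : E) :
    ‖b t x (φ y)‖ ≤ K * ‖x‖ + K * ((1 + L) + K * ‖y‖) := by
  have hu : ‖φ y‖ ≤ L + K * ‖y‖ := (norm_apply_le_norm_apply_zero_add hφ y).trans (by linarith)
  calc ‖b t x (φ y)‖ ≤ K * (1 + ‖φ y‖) + K * ‖x‖ :=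
        (norm_apply_le_norm_apply_zero_add (hb t · · (φ y)) x).trans (by linarith [hb0 t (φ y)])
    _ ≤ K * ‖x‖ + K * ((1 + L) + K * ‖y‖) := by nlinarith

theorem gronwallBound_add_le_exp {δ K c τ : ℝ} (hδ : 0 ≤ δ) (hK : 0 ≤ K) (hc : 0 ≤ c)
    (hτ : 0 ≤ τ) :
    gronwallBound δ K (K * (c + K * δ)) τ + c ≤ exp ((K + K ^ 2) * τ) * (δ + c) := by
  rcases hK.eq_or_lt with rfl | hK
  · simp [gronwallBound_K0]
  set e := exp (K * τ)
  have he : e - 1 ≤ K * τ * e := by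
    have := add_one_le_exp (-(K * τ))
    have hinv : exp (-(K * τ)) * e = 1 := by rw [← exp_add, neg_add_cancel, exp_zero]
    nlinarith [exp_pos (K * τ)]
  have hK2 : 1 + K ^ 2 * τ ≤ exp (K ^ 2 * τ) := by linarith [add_one_le_exp (K ^ 2 * τ)]
  have hsplit : exp ((K + K ^ 2) * τ) = e * exp (K ^ 2 * τ) := by rw [← exp_add]; ring_nf
  rw [gronwallBound_of_K_ne_0 hK.ne', mul_div_cancel_left₀ _ hK.ne', hsplit]
  calc δ * e + (c + K * δ) * (e - 1) + c = e * (δ + c) + K * δ * (e - 1) := by ring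
    _ ≤ e * (δ + c) + K * δ * (K * τ * e) := by gcongr
    _ = e * ((1 + K ^ 2 * τ) * (δ + c) - K ^ 2 * τ * c) := by ring
    _ ≤ e * (exp (K ^ 2 * τ) * (δ + c)) := by
      gcongr
      nlinarith [mul_le_mul_of_nonneg_right hK2 (add_nonneg hδ hc),
        mul_nonneg (mul_nonneg (sq_nonneg K) hτ) hc]
    _ = e * exp (K ^ 2 * τ) * (δ + c) := by ring

theorem norm_add_le_exp_mul_of_norm_deriv_le {E : Type*} [NormedAddCommGroup E]
    [NormedSpace ℝ E] {f f' : ℝ → E} {a b K c : ℝ} (hK : 0 ≤ K) (hc : 0 ≤ c)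
    (hf : ContinuousOn f (Icc a b))
    (hf' : ∀ x ∈ Icc a b, HasDerivWithinAt f (f' x) (Icc a b) x)
    (bound : ∀ x ∈ Icc a b, ‖f' x‖ ≤ K * ‖f x‖ + K * (c + K * ‖f a‖)) :
    ∀ s ∈ Icc a b, ‖f s‖ + c ≤ exp ((K + K ^ 2) * (b - a)) * (‖f a‖ + c) := by
  intro s hs
  have hgronwall := norm_le_gronwallBound_of_norm_deriv_right_le hf
    (fun x hx => (hf' x (Ico_subset_Icc_self hx)).mono_of_mem_nhdsWithin
      (Icc_mem_nhdsGE_of_mem hx))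
    le_rfl (fun x hx => bound x (Ico_subset_Icc_self hx)) s hs
  have hmono := gronwallBound_mono (ε := K * (c + K * ‖f a‖)) (norm_nonneg (f a))
    (by positivity) hK (sub_le_sub_right hs.2 a)
  linarith [gronwallBound_add_le_exp (norm_nonneg (f a)) hK hc (sub_nonneg.2 (hs.1.trans hs.2))]

theorem le_pow_mul_of_forall_mem_Icc_le_mul {z : ℝ → ℝ} {h ρ : ℝ} (hh : 0 ≤ h) (hρ : 1 ≤ ρ)
    (hz : 0 ≤ z 0) (N : ℕ)
    (step : ∀ i < N, ∀ s ∈ Icc ((i : ℝ) * h) (((i : ℝ) + 1) * h), z s ≤ ρ * z (i * h)) :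
    ∀ t ∈ Icc 0 (N * h), z t ≤ ρ ^ N * z 0 := by
  induction N with
  | zero =>
    intro t ht
    simp [le_antisymm (by simpa using ht.2) ht.1]
  | succ N ih =>
    have ih := ih fun i hi => step i (hi.trans N.lt_succ_self)
    intro t ht
    rcases le_or_gt t (N * h) with htN | htN
    · calc z t ≤ ρ ^ N * z 0 := ih t ⟨ht.1, htN⟩
        _ ≤ ρ ^ (N + 1) * z 0 := mul_le_mul_of_nonneg_right (pow_le_pow_right₀ hρ N.le_succ) hz
    · calc z t ≤ ρ * z (N * h) := step N N.lt_succ_self t ⟨htN.le, by simpa using ht.2⟩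
        _ ≤ ρ * (ρ ^ N * z 0) :=
          mul_le_mul_of_nonneg_left (ih _ ⟨by positivity, le_rfl⟩) (by linarith)
        _ = ρ ^ (N + 1) * z 0 := by ring

/-- Noiseless (σ ≡ 0) case of Lemma 4.1 of the paper: the state trajectory driven by
the piecewise feedback control `u_t = φ_i(X(t_i))` on `[t_i, t_{i+1}]`, with `b`
Lipschitz in the state, of linear growth in the control, and feedback maps `φ_i`
uniformly `K`-Lipschitz with `|φ_i(0)| ≤ L`, satisfies the growth bound
`sup_{0 ≤ t ≤ T} |X(t)| ≤ C(1 + |x₀|)` with a constant `C` depending only on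
`K`, `L` and `T`, not on the number of time steps `N`. -/
theorem piecewise_feedback_state_bound
    (n m : ℕ) (T K L : ℝ) (hT : 0 < T) (hK : 0 < K) (hL : 0 < L) :
    ∃ C : ℝ, ∀ (N : ℕ), 0 < N →
      ∀ b : ℝ → EuclideanSpace ℝ (Fin n) → EuclideanSpace ℝ (Fin m) →
            EuclideanSpace ℝ (Fin n),
      Continuous (fun p : ℝ × EuclideanSpace ℝ (Fin n) × EuclideanSpace ℝ (Fin m) =>
        b p.1 p.2.1 p.2.2) →
      (∀ t x y u, ‖b t x u - b t y u‖ ≤ K * ‖x - y‖) →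
      (∀ t u, ‖b t 0 u‖ ≤ K * (1 + ‖u‖)) →
      ∀ φ : ℕ → EuclideanSpace ℝ (Fin n) → EuclideanSpace ℝ (Fin m),
      (∀ i < N, ∀ x y, ‖φ i x - φ i y‖ ≤ K * ‖x - y‖) →
      (∀ i < N, ‖φ i 0‖ ≤ L) →
      ∀ (x₀ : EuclideanSpace ℝ (Fin n)) (X : ℝ → EuclideanSpace ℝ (Fin n)),
      ContinuousOn X (Set.Icc 0 T) →
      X 0 = x₀ →
      (∀ i < N, ∀ t ∈ Set.Icc ((i : ℝ) * (T / N)) (((i : ℝ) + 1) * (T / N)),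
        HasDerivWithinAt X (b t (X t) (φ i (X ((i : ℝ) * (T / N)))))
          (Set.Icc ((i : ℝ) * (T / N)) (((i : ℝ) + 1) * (T / N))) t) →
      ∀ t ∈ Set.Icc (0:ℝ) T, ‖X t‖ ≤ C * (1 + ‖x₀‖) := by
  refine ⟨exp ((K + K ^ 2) * T) * (2 + L), ?_⟩
  intro N hN b _ hb hb0 φ hφ hφ0 x₀ X hX hX0 hX' t ht
  have hNT : (N : ℝ) * (T / N) = T := mul_div_cancel₀ T (by positivity)
  have step : ∀ i < N, ∀ s ∈ Icc ((i : ℝ) * (T / N)) (((i : ℝ) + 1) * (T / N)),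
      ‖X s‖ + (1 + L) ≤ exp ((K + K ^ 2) * (T / N)) * (‖X (i * (T / N))‖ + (1 + L)) := by
    intro i hi
    have hsub : Icc ((i : ℝ) * (T / N)) ((i + 1) * (T / N)) ⊆ Icc 0 T :=
      Icc_subset_Icc (by positivity) (le_of_le_of_eq (by gcongr; exact_mod_cast hi) hNT)
    have hbound := norm_add_le_exp_mul_of_norm_deriv_le hK.le (by positivity) (hX.mono hsub)
      (hX' i hi)
      fun s _ => norm_drift_feedback_le hK.le hb hb0 (hφ i hi) (hφ0 i hi) s (X s) _
    rwa [show ((i : ℝ) + 1) * (T / N) - i * (T / N) = T / N by ring] at hbound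
  have hgrowth := le_pow_mul_of_forall_mem_Icc_le_mul (z := fun s => ‖X s‖ + (1 + L))
    (by positivity) (one_le_exp (by positivity)) (by positivity) N step t (hNT.symm ▸ ht)
  rw [← exp_nat_mul, ← mul_assoc, mul_comm (N : ℝ), mul_assoc, hNT, hX0] at hgrowth
  calc ‖X t‖ ≤ exp ((K + K ^ 2) * T) * (‖x₀‖ + (1 + L)) := by linarith
    _ ≤ exp ((K + K ^ 2) * T) * (2 + L) * (1 + ‖x₀‖) := by
      rw [mul_assoc]
      gcongr
      nlinarith [norm_nonneg x₀]
end
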